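/- arXiv:1903.01630 — 3 statements merged into one kernel-verified Lean document; each statement's English description precedes it below -/
import Mathlib

section
/- With G a d-regular graph on [n], the polynomial P_n(x_1,...,x_n) = E_{x' ∈ {0,1}^{E(G)}}[ ∏_{i∈[n]} (1 + x_i · 2^{deg_H(i)}) ] satisfies P_n = ∑_{S⊆[n]} x^S · B^{|S|} · A^{|E(S)|}, where B = (3/2)^d and A = 10/9. -/
attribute [local instance] Classical.propDecidable

/-- The set of edges of `G` with both endpoints in `S`. -/
noncomputable def edgesIn {n : ℕ} (G : SimpleGraph (Fin n)) (S : Finset (Fin n)) :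
    Finset (Sym2 (Fin n)) :=
  G.edgeFinset.filter (fun e => ∀ v ∈ e, v ∈ S)

/-- The degree of vertex `i` in the subgraph `H` of `G` given by the Boolean assignment
    `x'` to the edges. -/
noncomputable def degH {n : ℕ} (G : SimpleGraph (Fin n)) (x' : Sym2 (Fin n) → Bool)
    (i : Fin n) : ℕ :=
  ∑ e ∈ G.edgeFinset.filter (fun e => i ∈ e), if x' e then 1 else 0

section Aux

variable {n : ℕ} (G : SimpleGraph (Fin n)) (S : Finset (Fin n))

/-- abbreviation for the number of endpoints of `e` in `S`. -/
noncomputable def wgt (e : Sym2 (Fin n)) : ℕ := (S.filter (· ∈ e)).card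

lemma L1 (x' : Sym2 (Fin n) → Bool) :
    ∑ i ∈ S, degH G x' i = ∑ e ∈ G.edgeFinset, if x' e then wgt S e else 0 := by
  unfold degH wgt
  rw [Finset.sum_comm' (s := S) (t := fun i => G.edgeFinset.filter (fun e => i ∈ e))
    (t' := G.edgeFinset) (s' := fun e => S.filter (· ∈ e)) (by intro i e; simp; tauto)]
  refine Finset.sum_congr rfl fun e _ => ?_
  rw [Finset.sum_const, smul_eq_mul]
  split_ifs <;> simp

lemma L2 (x' : Sym2 (Fin n) → Bool) :
    ∏ i ∈ S, (2:ℝ) ^ degH G x' i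
      = ∏ e ∈ G.edgeFinset, (if x' e then (2:ℝ) ^ wgt S e else 1) := by
  rw [Finset.prod_pow_eq_pow_sum, L1, ← Finset.prod_pow_eq_pow_sum]
  refine Finset.prod_congr rfl fun e _ => ?_
  split_ifs <;> simp

set_option maxHeartbeats 1000000 in
lemma L3 :
    (Fintype.card (Sym2 (Fin n) → Bool) : ℝ)⁻¹ *
        ∑ x' : Sym2 (Fin n) → Bool,
          ∏ e ∈ G.edgeFinset, (if x' e then (2:ℝ) ^ wgt S e else 1)
      = ∏ e ∈ G.edgeFinset, ((1 + (2:ℝ) ^ wgt S e) / 2) := by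
  have h1 : ∀ x' : Sym2 (Fin n) → Bool,
      ∏ e ∈ G.edgeFinset, (if x' e then (2:ℝ) ^ wgt S e else 1)
        = ∏ e : Sym2 (Fin n),
            (if e ∈ G.edgeFinset then (if x' e then (2:ℝ) ^ wgt S e else 1) else 1) := by
    intro x'; rw [Finset.prod_ite_mem, Finset.univ_inter]
  simp only [h1]
  rw [show (∑ x : Sym2 (Fin n) → Bool, ∏ e : Sym2 (Fin n),
        if e ∈ G.edgeFinset then (if x e = true then (2:ℝ) ^ wgt S e else 1) else 1)
      = ∏ e : Sym2 (Fin n), ∑ b : Bool,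
        (if e ∈ G.edgeFinset then (if b = true then (2:ℝ) ^ wgt S e else 1) else 1)
    from (Fintype.prod_sum (fun e b =>
      if e ∈ G.edgeFinset then (if b = true then (2:ℝ) ^ wgt S e else 1) else 1)).symm]
  have hcard : (Fintype.card (Sym2 (Fin n) → Bool) : ℝ)
      = ∏ _e : Sym2 (Fin n), (2:ℝ) := by
    simp [Fintype.card_fun]
  rw [hcard, ← Finset.prod_inv_distrib, ← Finset.prod_mul_distrib]
  have h3 : ∀ e : Sym2 (Fin n),
      (2:ℝ)⁻¹ * ∑ b : Bool,
          (if e ∈ G.edgeFinset then (if b = true then (2:ℝ) ^ wgt S e else 1) else 1)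
        = (if e ∈ G.edgeFinset then (1 + (2:ℝ) ^ wgt S e) / 2 else 1) := by
    intro e
    by_cases he : e ∈ G.edgeFinset <;> simp [he, Fintype.sum_bool] <;> ring
  simp only [h3]
  exact Fintype.prod_ite_mem G.edgeFinset (fun e => (1 + (2:ℝ) ^ wgt S e) / 2)

lemma L4 {e : Sym2 (Fin n)} (he : e ∈ G.edgeFinset) :
    wgt S e ≤ 2 ∧ (wgt S e = 2 ↔ e ∈ edgesIn G S) := by
  induction e with
  | _ a b =>
    rw [SimpleGraph.mem_edgeFinset, SimpleGraph.mem_edgeSet] at he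
    have hne : a ≠ b := he.ne
    have hf : S.filter (· ∈ s(a, b)) = S ∩ {a, b} := by
      ext i; simp [Sym2.mem_iff, and_comm]
    have hcard2 : ({a, b} : Finset (Fin n)).card = 2 := by
      rw [Finset.card_insert_of_notMem (by simpa using hne), Finset.card_singleton]
    have hsub : S ∩ {a, b} ⊆ {a, b} := Finset.inter_subset_right
    have hle : wgt S s(a, b) ≤ 2 := by
      rw [wgt, hf, ← hcard2]; exact Finset.card_le_card hsub
    refine ⟨hle, ?_⟩
    have hmem : s(a, b) ∈ edgesIn G S ↔ a ∈ S ∧ b ∈ S := by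
      simp [edgesIn, he, Sym2.forall_mem_pair]
    rw [wgt, hf, hmem]
    constructor
    · intro h
      have h2 : S ∩ {a, b} = {a, b} :=
        Finset.eq_of_subset_of_card_le hsub (by omega)
      rw [Finset.inter_eq_right] at h2
      exact ⟨h2 (by simp), h2 (by simp)⟩
    · rintro ⟨ha, hb⟩
      have h2 : S ∩ {a, b} = {a, b} := by
        rw [Finset.inter_eq_right]
        intro i hi
        simp only [Finset.mem_insert, Finset.mem_singleton] at hi
        rcases hi with rfl | rfl <;> assumption
      rw [h2, hcard2]

lemma L4' {e : Sym2 (Fin n)} (he : e ∈ G.edgeFinset) :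
    (1 + (2:ℝ) ^ wgt S e) / 2
      = (3/2 : ℝ) ^ wgt S e * (10/9 : ℝ) ^ (if e ∈ edgesIn G S then 1 else 0) := by
  obtain ⟨hle, hiff⟩ := L4 G S he
  have h012 : wgt S e = 0 ∨ wgt S e = 1 ∨ wgt S e = 2 := by omega
  rcases h012 with h | h | h <;> rw [h] <;> rw [h] at hiff
  · have hn : ¬ e ∈ edgesIn G S := by rw [← hiff]; omega
    simp [hn]
  · have hn : ¬ e ∈ edgesIn G S := by rw [← hiff]; omega
    simp [hn]; norm_num
  · have hm : e ∈ edgesIn G S := hiff.mp rfl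
    simp [hm]; norm_num

lemma L5 (hreg : G.IsRegularOfDegree d) :
    ∑ e ∈ G.edgeFinset, wgt S e = d * S.card := by
  unfold wgt
  simp only [Finset.card_eq_sum_ones]
  rw [Finset.sum_comm' (s := G.edgeFinset) (t := fun e => S.filter (· ∈ e))
    (t' := S) (s' := fun i => G.edgeFinset.filter (fun e => i ∈ e)) (by intro e i; simp; tauto)]
  have hdeg : ∀ i : Fin n, (G.edgeFinset.filter (fun e => i ∈ e)).card = d := by
    intro i
    have h1 : G.incidenceFinset i = G.edgeFinset.filter (fun e => i ∈ e) := by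
      rw [SimpleGraph.incidenceFinset_eq_filter]
    rw [← h1, SimpleGraph.card_incidenceFinset_eq_degree, hreg i]
  simp only [Finset.sum_const, smul_eq_mul, mul_one]
  rw [Finset.sum_congr rfl (fun i _ => hdeg i), Finset.sum_const, smul_eq_mul, mul_comm]

lemma L6 : ∑ e ∈ G.edgeFinset, (if e ∈ edgesIn G S then 1 else 0) = (edgesIn G S).card := by
  rw [← Finset.sum_filter, Finset.sum_const, smul_eq_mul, mul_one]
  congr 1
  ext e
  simp only [Finset.mem_filter, edgesIn]
  tauto

lemma key (d : ℕ) (hreg : G.IsRegularOfDegree d) :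
    (Fintype.card (Sym2 (Fin n) → Bool) : ℝ)⁻¹ *
        ∑ x' : Sym2 (Fin n) → Bool, ∏ i ∈ S, (2:ℝ) ^ degH G x' i
      = ((3/2 : ℝ) ^ d) ^ S.card * (10/9 : ℝ) ^ (edgesIn G S).card := by
  simp only [L2]
  rw [L3, Finset.prod_congr rfl (fun e he => L4' G S he), Finset.prod_mul_distrib,
    Finset.prod_pow_eq_pow_sum, Finset.prod_pow_eq_pow_sum, L5 G S hreg, L6, ← pow_mul,
    mul_comm d S.card, pow_mul]

end Aux

/-- For a d-regular G, the polynomial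
    P_n = E_{x'}[ ∏_i (1 + x_i 2^{deg_H(i)}) ] equals ∑_S x^S B^{|S|} A^{|E(S)|}
    with B = (3/2)^d and A = 10/9. -/
theorem stmt_3 (n d : ℕ) (G : SimpleGraph (Fin n)) (hreg : G.IsRegularOfDegree d) :
    (Fintype.card (Sym2 (Fin n) → Bool) : ℝ)⁻¹ •
        ∑ x' : Sym2 (Fin n) → Bool,
          ∏ i : Fin n,
            (1 + MvPolynomial.C ((2 : ℝ) ^ degH G x' i) * MvPolynomial.X i)
      = ∑ S : Finset (Fin n),
          MvPolynomial.C (((3/2 : ℝ) ^ d) ^ S.card * (10/9 : ℝ) ^ (edgesIn G S).card) *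
            ∏ i ∈ S, MvPolynomial.X i := by
  have hexp : ∀ x' : Sym2 (Fin n) → Bool,
      ∏ i : Fin n, (1 + MvPolynomial.C ((2 : ℝ) ^ degH G x' i) * MvPolynomial.X i)
        = ∑ S : Finset (Fin n),
            MvPolynomial.C (∏ i ∈ S, (2:ℝ) ^ degH G x' i) * ∏ i ∈ S, MvPolynomial.X i := by
    intro x'
    have := Fintype.prod_add
      (f := fun i : Fin n => MvPolynomial.C ((2 : ℝ) ^ degH G x' i) * MvPolynomial.X i)
      (g := fun _ : Fin n => (1 : MvPolynomial (Fin n) ℝ))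
    simp only [add_comm] at this ⊢
    rw [this]
    refine Finset.sum_congr rfl fun S _ => ?_
    rw [Finset.prod_const_one, mul_one, Finset.prod_mul_distrib, map_prod]
  simp only [hexp]
  rw [Finset.sum_comm, Finset.smul_sum]
  refine Finset.sum_congr rfl fun S _ => ?_
  rw [← Finset.sum_mul, ← map_sum, MvPolynomial.smul_eq_C_mul, ← mul_assoc,
    ← map_mul, key G S d hreg]
end

section
/- Let G be a graph, M_1 and M_2 matchings whose vertex sets S_1, S_2 each have the property that unmatched pairs within them are at distance ≥ 3 in G, and let (U,V) be a partition of V(G). Set R_ℓ = S_ℓ ∩ U, T_ℓ = S_ℓ ∩ V. Let E_1 be the set of edges of G with at least one endpoint at distance ≤ 1 from S_1. Then |E(R_1, T_2)| + |E(R_2, T_1)| ≤ 4·|E_1 ∩ M_2|. -/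
attribute [local instance] Classical.propDecidable

/-- The set of edges of `G` with one endpoint in `U` and the other in `V`. -/
noncomputable def edgesBetween {n : ℕ} (G : SimpleGraph (Fin n)) (U V : Finset (Fin n)) :
    Finset (Sym2 (Fin n)) :=
  G.edgeFinset.filter (fun e => ∃ u ∈ U, ∃ v ∈ V, e = s(u, v))

/-- The set of endpoints of the edges in `M`. -/
noncomputable def matchedVerts {n : ℕ} (M : Finset (Sym2 (Fin n))) : Finset (Fin n) :=
  Finset.univ.filter (fun v => ∃ e ∈ M, v ∈ e)

/-- `u` and `v` are at graph distance at least 3 in `G`. -/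
def FarApart {n : ℕ} (G : SimpleGraph (Fin n)) (u v : Fin n) : Prop :=
  u ≠ v ∧ ¬ G.Adj u v ∧ ∀ w, ¬ (G.Adj u w ∧ G.Adj w v)

/-- The set of vertices at distance at most 1 from `S` in `G`. -/
noncomputable def ball1 {n : ℕ} (G : SimpleGraph (Fin n)) (S : Finset (Fin n)) :
    Finset (Fin n) :=
  Finset.univ.filter (fun v => v ∈ S ∨ ∃ u ∈ S, G.Adj v u)

/-- The set of edges of `G` with at least one endpoint in `T`. -/
noncomputable def edgesTouching {n : ℕ} (G : SimpleGraph (Fin n)) (T : Finset (Fin n)) :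
    Finset (Sym2 (Fin n)) :=
  G.edgeFinset.filter (fun e => ∃ v ∈ e, v ∈ T)

noncomputable def phiAux {n : ℕ} (M : Finset (Sym2 (Fin n))) (W : Finset (Fin n))
    (e : Sym2 (Fin n)) : Sym2 (Fin n) :=
  if h : ∃ f ∈ M, ∃ v, v ∈ f ∧ v ∈ e ∧ v ∈ W then h.choose else e

lemma phiAux_spec {n : ℕ} {M : Finset (Sym2 (Fin n))} {W : Finset (Fin n)}
    {e : Sym2 (Fin n)} (h : ∃ f ∈ M, ∃ v, v ∈ f ∧ v ∈ e ∧ v ∈ W) :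
    phiAux M W e ∈ M ∧ ∃ v, v ∈ phiAux M W e ∧ v ∈ e ∧ v ∈ W := by
  rw [phiAux, dif_pos h]
  exact ⟨h.choose_spec.1, h.choose_spec.2⟩

/-- For matchings M₁, M₂ whose vertex sets S₁, S₂ have the distance-≥3
    property, and a partition (U,V), with R_ℓ = S_ℓ ∩ U, T_ℓ = S_ℓ ∩ V and E₁ the edges
    meeting the distance-≤1 neighbourhood of S₁:
    |E(R₁,T₂)| + |E(R₂,T₁)| ≤ 4·|E₁ ∩ M₂|. -/
theorem stmt_16 (n : ℕ) (G : SimpleGraph (Fin n))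
    (M₁ M₂ : Finset (Sym2 (Fin n)))
    (hM₁ : M₁ ⊆ G.edgeFinset) (hM₂ : M₂ ⊆ G.edgeFinset)
    (hmatch₁ : ∀ e ∈ M₁, ∀ f ∈ M₁, e ≠ f → ∀ v : Fin n, v ∈ e → v ∉ f)
    (hmatch₂ : ∀ e ∈ M₂, ∀ f ∈ M₂, e ≠ f → ∀ v : Fin n, v ∈ e → v ∉ f)
    (hfar₁ : ∀ u ∈ matchedVerts M₁, ∀ v ∈ matchedVerts M₁,
      u ≠ v → s(u, v) ∉ M₁ → FarApart G u v)
    (hfar₂ : ∀ u ∈ matchedVerts M₂, ∀ v ∈ matchedVerts M₂,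
      u ≠ v → s(u, v) ∉ M₂ → FarApart G u v)
    (U V : Finset (Fin n)) (hdisj : Disjoint U V) (hcover : U ∪ V = Finset.univ) :
    (edgesBetween G (matchedVerts M₁ ∩ U) (matchedVerts M₂ ∩ V)).card +
      (edgesBetween G (matchedVerts M₂ ∩ U) (matchedVerts M₁ ∩ V)).card ≤
    4 * ((edgesTouching G (ball1 G (matchedVerts M₁))) ∩ M₂).card := by
  classical
  set S₁ := matchedVerts M₁ with hS₁def
  set S₂ := matchedVerts M₂ with hS₂def
  set A := edgesBetween G (S₁ ∩ U) (S₂ ∩ V) with hAdef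
  set B := edgesBetween G (S₂ ∩ U) (S₁ ∩ V) with hBdef
  set T := (edgesTouching G (ball1 G S₁)) ∩ M₂ with hTdef
  -- any vertex has at most 2 neighbours in S₁
  have hnbr : ∀ v : Fin n, (S₁.filter (fun u => G.Adj v u)).card ≤ 2 := by
    intro v
    by_contra hc
    push_neg at hc
    set N := S₁.filter (fun u => G.Adj v u) with hNdef
    have key : ∀ x ∈ N, ∀ y ∈ N, x ≠ y → s(x, y) ∈ M₁ := by
      intro x hx y hy hxy
      by_contra hnm
      obtain ⟨hxS, hxadj⟩ := Finset.mem_filter.mp hx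
      obtain ⟨hyS, hyadj⟩ := Finset.mem_filter.mp hy
      exact (hfar₁ x hxS y hyS hxy hnm).2.2 v ⟨hxadj.symm, hyadj⟩
    have hpos : 0 < N.card := by omega
    obtain ⟨u₁, hu₁⟩ := Finset.card_pos.mp hpos
    have h2 : 1 < N.card := by omega
    obtain ⟨u₂, hu₂, hne21⟩ := Finset.exists_mem_ne h2 u₁
    have h3 : 1 < (N.erase u₁).card := by
      rw [Finset.card_erase_of_mem hu₁]; omega
    obtain ⟨u₃, hu₃, hne32⟩ := Finset.exists_mem_ne h3 u₂
    have hne31 : u₃ ≠ u₁ := (Finset.mem_erase.mp hu₃).1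
    have hu₃N : u₃ ∈ N := (Finset.mem_erase.mp hu₃).2
    have h12 : s(u₁, u₂) ∈ M₁ := key u₁ hu₁ u₂ hu₂ (Ne.symm hne21)
    have h13 : s(u₁, u₃) ∈ M₁ := key u₁ hu₁ u₃ hu₃N (Ne.symm hne31)
    have hedne : s(u₁, u₂) ≠ s(u₁, u₃) := by
      intro h
      have : u₂ ∈ s(u₁, u₃) := h ▸ Sym2.mem_mk_right u₁ u₂
      rcases Sym2.mem_iff.mp this with h' | h'
      · exact hne21 h'
      · exact hne32 h'.symm
    exact hmatch₁ _ h12 _ h13 hedne u₁ (Sym2.mem_mk_left u₁ u₂)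
      (Sym2.mem_mk_left u₁ u₃)
  -- structure of A and B membership
  have hAelim : ∀ e ∈ A, ∃ u v, u ∈ S₁ ∧ u ∈ U ∧ v ∈ S₂ ∧ v ∈ V ∧ G.Adj u v ∧ e = s(u, v) := by
    intro e he
    obtain ⟨heE, u, hu, v, hv, rfl⟩ := Finset.mem_filter.mp he
    obtain ⟨hu1, hu2⟩ := Finset.mem_inter.mp hu
    obtain ⟨hv1, hv2⟩ := Finset.mem_inter.mp hv
    exact ⟨u, v, hu1, hu2, hv1, hv2,
      (G.mem_edgeSet).mp (SimpleGraph.mem_edgeFinset.mp heE), rfl⟩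
  have hBelim : ∀ e ∈ B, ∃ u v, u ∈ S₂ ∧ u ∈ U ∧ v ∈ S₁ ∧ v ∈ V ∧ G.Adj u v ∧ e = s(u, v) := by
    intro e he
    obtain ⟨heE, u, hu, v, hv, rfl⟩ := Finset.mem_filter.mp he
    obtain ⟨hu1, hu2⟩ := Finset.mem_inter.mp hu
    obtain ⟨hv1, hv2⟩ := Finset.mem_inter.mp hv
    exact ⟨u, v, hu1, hu2, hv1, hv2,
      (G.mem_edgeSet).mp (SimpleGraph.mem_edgeFinset.mp heE), rfl⟩
  -- conditions for phiAux
  have hcondA : ∀ e ∈ A, ∃ f ∈ M₂, ∃ v, v ∈ f ∧ v ∈ e ∧ v ∈ V := by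
    intro e he
    obtain ⟨u, v, _, _, hvS₂, hvV, _, rfl⟩ := hAelim e he
    obtain ⟨f, hfM, hvf⟩ := (Finset.mem_filter.mp hvS₂).2
    exact ⟨f, hfM, v, hvf, Sym2.mem_mk_right u v, hvV⟩
  have hcondB : ∀ e ∈ B, ∃ f ∈ M₂, ∃ v, v ∈ f ∧ v ∈ e ∧ v ∈ U := by
    intro e he
    obtain ⟨u, v, huS₂, huU, _, _, _, rfl⟩ := hBelim e he
    obtain ⟨f, hfM, huf⟩ := (Finset.mem_filter.mp huS₂).2
    exact ⟨f, hfM, u, huf, Sym2.mem_mk_left u v, huU⟩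
  set Φ : Sym2 (Fin n) ⊕ Sym2 (Fin n) → Sym2 (Fin n) :=
    Sum.elim (phiAux M₂ V) (phiAux M₂ U) with hΦdef
  have hmaps : ∀ x ∈ A.disjSum B, Φ x ∈ T := by
    rintro (e | e) hx
    · have heA : e ∈ A := Finset.inl_mem_disjSum.mp hx
      obtain ⟨hΦM, w, hwΦ, hwe, hwV⟩ := phiAux_spec (hcondA e heA)
      obtain ⟨u, v, huS₁, huU, hvS₂, hvV, hadj, rfl⟩ := hAelim e heA
      have hw : w = v := by
        rcases Sym2.mem_iff.mp hwe with h | h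
        · exact absurd (h ▸ hwV) (Finset.disjoint_left.mp hdisj huU)
        · exact h
      subst hw
      refine Finset.mem_inter.mpr ⟨Finset.mem_filter.mpr ⟨hM₂ hΦM, w, hwΦ, ?_⟩, hΦM⟩
      exact Finset.mem_filter.mpr ⟨Finset.mem_univ _, Or.inr ⟨u, huS₁, hadj.symm⟩⟩
    · have heB : e ∈ B := Finset.inr_mem_disjSum.mp hx
      obtain ⟨hΦM, w, hwΦ, hwe, hwU⟩ := phiAux_spec (hcondB e heB)
      obtain ⟨u, v, huS₂, huU, hvS₁, hvV, hadj, rfl⟩ := hBelim e heB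
      have hw : w = u := by
        rcases Sym2.mem_iff.mp hwe with h | h
        · exact h
        · exfalso; subst h; exact Finset.disjoint_left.mp hdisj hwU hvV
      subst hw
      refine Finset.mem_inter.mpr ⟨Finset.mem_filter.mpr ⟨hM₂ hΦM, w, hwΦ, ?_⟩, hΦM⟩
      exact Finset.mem_filter.mpr ⟨Finset.mem_univ _, Or.inr ⟨v, hvS₁, hadj⟩⟩
  have hfib : ∀ f ∈ T, ((A.disjSum B).filter (fun x => Φ x = f)).card ≤ 4 := by
    intro f hfT
    revert hfT
    induction f using Sym2.ind with
    | _ a b =>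
      intro hfT
      -- the target sets
      set g : Fin n → Fin n → Sym2 (Fin n) ⊕ Sym2 (Fin n) :=
        fun w u => if w ∈ V then Sum.inl s(u, w) else Sum.inr s(u, w) with hgdef
      set Na := S₁.filter (fun u => G.Adj a u) with hNadef
      set Nb := S₁.filter (fun u => G.Adj b u) with hNbdef
      have hsub : (A.disjSum B).filter (fun x => Φ x = s(a, b)) ⊆
          Na.image (g a) ∪ Nb.image (g b) := by
        rintro (e | e) hx
        · obtain ⟨hmem, hΦ⟩ := Finset.mem_filter.mp hx
          have heA : e ∈ A := Finset.inl_mem_disjSum.mp hmem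
          have hcond := hcondA e heA
          obtain ⟨hΦM, w, hwΦ, hwe, hwV⟩ := phiAux_spec hcond
          rw [show phiAux M₂ V e = Φ (Sum.inl e) from rfl, hΦ] at hwΦ
          obtain ⟨u, v, huS₁, huU, hvS₂, hvV, hadj, rfl⟩ := hAelim e heA
          have hw : w = v := by
            rcases Sym2.mem_iff.mp hwe with h | h
            · exact absurd (h ▸ hwV) (Finset.disjoint_left.mp hdisj huU)
            · exact h
          subst hw
          rcases Sym2.mem_iff.mp hwΦ with h | h
          · subst h
            refine Finset.mem_union_left _ (Finset.mem_image.mpr ⟨u, ?_, ?_⟩)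
            · exact Finset.mem_filter.mpr ⟨huS₁, hadj.symm⟩
            · rw [hgdef]; simp only [if_pos hwV]
          · subst h
            refine Finset.mem_union_right _ (Finset.mem_image.mpr ⟨u, ?_, ?_⟩)
            · exact Finset.mem_filter.mpr ⟨huS₁, hadj.symm⟩
            · rw [hgdef]; simp only [if_pos hwV]
        · obtain ⟨hmem, hΦ⟩ := Finset.mem_filter.mp hx
          have heB : e ∈ B := Finset.inr_mem_disjSum.mp hmem
          have hcond := hcondB e heB
          obtain ⟨hΦM, w, hwΦ, hwe, hwU⟩ := phiAux_spec hcond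
          rw [show phiAux M₂ U e = Φ (Sum.inr e) from rfl, hΦ] at hwΦ
          obtain ⟨u, v, huS₂, huU, hvS₁, hvV, hadj, rfl⟩ := hBelim e heB
          have hw : w = u := by
            rcases Sym2.mem_iff.mp hwe with h | h
            · exact h
            · exfalso; subst h; exact Finset.disjoint_left.mp hdisj hwU hvV
          subst hw
          have hwnV : w ∉ V := Finset.disjoint_left.mp hdisj hwU
          rcases Sym2.mem_iff.mp hwΦ with h | h
          · subst h
            refine Finset.mem_union_left _ (Finset.mem_image.mpr ⟨v, ?_, ?_⟩)
            · exact Finset.mem_filter.mpr ⟨hvS₁, hadj⟩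
            · rw [hgdef]; simp only [if_neg hwnV, Sym2.eq_swap]
          · subst h
            refine Finset.mem_union_right _ (Finset.mem_image.mpr ⟨v, ?_, ?_⟩)
            · exact Finset.mem_filter.mpr ⟨hvS₁, hadj⟩
            · rw [hgdef]; simp only [if_neg hwnV, Sym2.eq_swap]
      calc ((A.disjSum B).filter (fun x => Φ x = s(a, b))).card
          ≤ (Na.image (g a) ∪ Nb.image (g b)).card := Finset.card_le_card hsub
        _ ≤ (Na.image (g a)).card + (Nb.image (g b)).card := Finset.card_union_le _ _
        _ ≤ Na.card + Nb.card := Nat.add_le_add (Finset.card_image_le) (Finset.card_image_le)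
        _ ≤ 4 := by have ha := hnbr a; have hb := hnbr b; rw [hNadef, hNbdef]; omega
  calc A.card + B.card = (A.disjSum B).card := (Finset.card_disjSum _ _).symm
    _ ≤ 4 * T.card := Finset.card_le_mul_card_image_of_maps_to hmaps 4 hfib
end

section
/- Let P = ∑_{S⊆[n]} x^S B^{|S|} A^{|E(S)|} with A, B > 1 and G a d-regular graph on [n]. Suppose gh ≤ P coefficient-wise, where g, h have non-negative coefficients in variables indexed by U and V respectively for a partition (U,V) of [n]. Then for any sets S_1 = R_1 ∪ T_1 and S_2 = R_2 ∪ T_2 with R_ℓ ⊆ U, T_ℓ ⊆ V: Coeff(x^{S_1}, gh)·Coeff(x^{S_2}, gh) ≤ B^{|S_1|+|S_2|} · A^{|E(R_1∪T_2)| + |E(R_2∪T_1)|}. -/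
attribute [local instance] Classical.propDecidable

/-- The exponent vector of the multilinear monomial x^S. -/
noncomputable def mexp {n : ℕ} (S : Finset (Fin n)) : Fin n →₀ ℕ :=
  ∑ i ∈ S, Finsupp.single i 1

lemma mexp_apply {n : ℕ} (S : Finset (Fin n)) (i : Fin n) :
    mexp S i = if i ∈ S then 1 else 0 := by
  classical
  simp [mexp, Finsupp.finset_sum_apply, Finsupp.single_apply]

lemma mexp_support {n : ℕ} (S : Finset (Fin n)) : (mexp S).support = S := by
  ext i; simp [Finsupp.mem_support_iff, mexp_apply]

lemma mexp_inj {n : ℕ} {S T : Finset (Fin n)} (hST : mexp S = mexp T) : S = T := by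
  rw [← mexp_support S, ← mexp_support T, hST]

lemma mexp_union {n : ℕ} {R T : Finset (Fin n)} (hd : Disjoint R T) :
    mexp (R ∪ T) = mexp R + mexp T := by
  rw [mexp, Finset.sum_union hd]; rfl

lemma prod_X_eq {n : ℕ} (S : Finset (Fin n)) :
    (∏ i ∈ S, MvPolynomial.X i : MvPolynomial (Fin n) ℝ) = MvPolynomial.monomial (mexp S) 1 := by
  classical
  rw [mexp]
  induction S using Finset.induction with
  | empty => simp
  | @insert x s hx ih =>
      rw [Finset.prod_insert hx, Finset.sum_insert hx, ih, MvPolynomial.X,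
        MvPolynomial.monomial_mul, one_mul]

lemma coeff_P {n : ℕ} (c : Finset (Fin n) → ℝ) (S : Finset (Fin n)) :
    (∑ T : Finset (Fin n), MvPolynomial.C (c T) * ∏ i ∈ T, MvPolynomial.X i).coeff (mexp S)
      = c S := by
  classical
  rw [MvPolynomial.coeff_sum]
  rw [Finset.sum_eq_single S]
  · simp [prod_X_eq, MvPolynomial.coeff_monomial]
  · intro T _ hT
    simp only [prod_X_eq, MvPolynomial.coeff_C_mul, MvPolynomial.coeff_monomial]
    rw [if_neg (fun hm => hT (mexp_inj hm))]
    simp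
  · simp

lemma coeff_mul_split {n : ℕ} (U V : Finset (Fin n)) (hdisj : Disjoint U V)
    (g h : MvPolynomial (Fin n) ℝ)
    (hg : g ∈ MvPolynomial.supported ℝ (↑U : Set (Fin n)))
    (hh : h ∈ MvPolynomial.supported ℝ (↑V : Set (Fin n)))
    (R T : Finset (Fin n)) (hR : R ⊆ U) (hT : T ⊆ V) :
    (g * h).coeff (mexp (R ∪ T)) = g.coeff (mexp R) * h.coeff (mexp T) := by
  classical
  have hdRT : Disjoint R T := hdisj.mono hR hT
  rw [MvPolynomial.coeff_mul]
  rw [Finset.sum_eq_single ((mexp R), (mexp T))]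
  · intro ab hab hne
    rw [Finset.HasAntidiagonal.mem_antidiagonal] at hab
    by_contra hne0
    have hga : g.coeff ab.1 ≠ 0 := fun h0 => hne0 (by rw [h0, zero_mul])
    have hhb : h.coeff ab.2 ≠ 0 := fun h0 => hne0 (by rw [h0, mul_zero])
    have hsa : ∀ i, i ∈ ab.1.support → i ∈ U := by
      intro i hi
      have : i ∈ g.vars := (MvPolynomial.mem_vars i).2
        ⟨ab.1, MvPolynomial.mem_support_iff.2 hga, hi⟩
      exact_mod_cast (MvPolynomial.mem_supported.1 hg) this
    have hsb : ∀ i, i ∈ ab.2.support → i ∈ V := by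
      intro i hi
      have : i ∈ h.vars := (MvPolynomial.mem_vars i).2
        ⟨ab.2, MvPolynomial.mem_support_iff.2 hhb, hi⟩
      exact_mod_cast (MvPolynomial.mem_supported.1 hh) this
    have ha : ab.1 = mexp R := by
      ext i
      by_cases hiU : i ∈ U
      · have hiV : i ∉ V := fun hv => (Finset.disjoint_left.1 hdisj hiU) hv
        have hb0 : ab.2 i = 0 := by
          by_contra hb
          exact hiV (hsb i (Finsupp.mem_support_iff.2 hb))
        have := congrArg (fun f : Fin n →₀ ℕ => f i) hab
        simp only [Finsupp.add_apply, hb0, add_zero] at this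
        rw [this, mexp_apply, mexp_apply]
        have : i ∈ R ∪ T ↔ i ∈ R := by
          constructor
          · intro hi
            rcases Finset.mem_union.1 hi with h1 | h2
            · exact h1
            · exact absurd (hT h2) hiV
          · exact fun hi => Finset.mem_union_left _ hi
        simp [this]
      · have ha0 : ab.1 i = 0 := by
          by_contra hb
          exact hiU (hsa i (Finsupp.mem_support_iff.2 hb))
        rw [ha0, mexp_apply, if_neg (fun hi => hiU (hR hi))]
    have hb : ab.2 = mexp T := by
      have := hab
      rw [ha, mexp_union hdRT] at this
      exact add_left_cancel this
    exact hne (Prod.ext ha hb)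
  · intro hmem
    exact absurd (Finset.HasAntidiagonal.mem_antidiagonal.2 (mexp_union hdRT).symm) hmem

/-- Let P = ∑_S x^S B^{|S|} A^{|E(S)|} with A,B > 1, G d-regular, and let
    gh ≤ P coefficientwise with g, h nonnegative and supported on the two sides U, V of a
    partition of [n]. Then for S₁ = R₁ ∪ T₁, S₂ = R₂ ∪ T₂ with R_ℓ ⊆ U, T_ℓ ⊆ V:
    Coeff(x^{S₁},gh)·Coeff(x^{S₂},gh) ≤ B^{|S₁|+|S₂|}·A^{|E(R₁∪T₂)|+|E(R₂∪T₁)|}. -/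
theorem stmt_18 (n d : ℕ) (G : SimpleGraph (Fin n)) (hreg : G.IsRegularOfDegree d)
    (A B : ℝ) (hA : 1 < A) (hB : 1 < B)
    (P : MvPolynomial (Fin n) ℝ)
    (hPdef : P = ∑ S : Finset (Fin n),
      MvPolynomial.C (B ^ S.card * A ^ (edgesIn G S).card) * ∏ i ∈ S, MvPolynomial.X i)
    (U V : Finset (Fin n)) (hdisj : Disjoint U V) (hcover : U ∪ V = Finset.univ)
    (g h : MvPolynomial (Fin n) ℝ)
    (hg : g ∈ MvPolynomial.supported ℝ (↑U : Set (Fin n)))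
    (hh : h ∈ MvPolynomial.supported ℝ (↑V : Set (Fin n)))
    (hgnn : ∀ m : Fin n →₀ ℕ, 0 ≤ g.coeff m)
    (hhnn : ∀ m : Fin n →₀ ℕ, 0 ≤ h.coeff m)
    (hle : ∀ m : Fin n →₀ ℕ, (g * h).coeff m ≤ P.coeff m)
    (R₁ R₂ T₁ T₂ : Finset (Fin n))
    (hR₁ : R₁ ⊆ U) (hR₂ : R₂ ⊆ U) (hT₁ : T₁ ⊆ V) (hT₂ : T₂ ⊆ V) :
    (g * h).coeff (mexp (R₁ ∪ T₁)) * (g * h).coeff (mexp (R₂ ∪ T₂)) ≤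
      B ^ ((R₁ ∪ T₁).card + (R₂ ∪ T₂).card) *
        A ^ ((edgesIn G (R₁ ∪ T₂)).card + (edgesIn G (R₂ ∪ T₁)).card) := by
  have spl := fun R T hR hT =>
    coeff_mul_split U V hdisj g h hg hh R T hR hT
  have hPc : ∀ S : Finset (Fin n),
      P.coeff (mexp S) = B ^ S.card * A ^ (edgesIn G S).card := by
    intro S
    rw [hPdef, coeff_P (fun T => B ^ T.card * A ^ (edgesIn G T).card) S]
  have key : ∀ R T (hR : R ⊆ U) (hT : T ⊆ V),
      g.coeff (mexp R) * h.coeff (mexp T) ≤ B ^ (R ∪ T).card * A ^ (edgesIn G (R ∪ T)).card := by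
    intro R T hR hT
    rw [← hPc, ← spl R T hR hT]
    exact hle _
  have hnn : ∀ R T, (0:ℝ) ≤ g.coeff (mexp R) * h.coeff (mexp T) :=
    fun R T => mul_nonneg (hgnn _) (hhnn _)
  rw [spl R₁ T₁ hR₁ hT₁, spl R₂ T₂ hR₂ hT₂]
  have hrw : g.coeff (mexp R₁) * h.coeff (mexp T₁) * (g.coeff (mexp R₂) * h.coeff (mexp T₂))
      = (g.coeff (mexp R₁) * h.coeff (mexp T₂)) * (g.coeff (mexp R₂) * h.coeff (mexp T₁)) := by
    ring
  rw [hrw]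
  have hcard : (R₁ ∪ T₂).card + (R₂ ∪ T₁).card = (R₁ ∪ T₁).card + (R₂ ∪ T₂).card := by
    rw [Finset.card_union_of_disjoint (hdisj.mono hR₁ hT₂),
      Finset.card_union_of_disjoint (hdisj.mono hR₂ hT₁),
      Finset.card_union_of_disjoint (hdisj.mono hR₁ hT₁),
      Finset.card_union_of_disjoint (hdisj.mono hR₂ hT₂)]
    ring
  calc (g.coeff (mexp R₁) * h.coeff (mexp T₂)) * (g.coeff (mexp R₂) * h.coeff (mexp T₁))
      ≤ (B ^ (R₁ ∪ T₂).card * A ^ (edgesIn G (R₁ ∪ T₂)).card) *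
        (B ^ (R₂ ∪ T₁).card * A ^ (edgesIn G (R₂ ∪ T₁)).card) := by
        apply mul_le_mul (key R₁ T₂ hR₁ hT₂) (key R₂ T₁ hR₂ hT₁) (hnn _ _)
        exact le_trans (hnn _ _) (key R₁ T₂ hR₁ hT₂)
    _ = B ^ ((R₁ ∪ T₂).card + (R₂ ∪ T₁).card) *
        A ^ ((edgesIn G (R₁ ∪ T₂)).card + (edgesIn G (R₂ ∪ T₁)).card) := by
        rw [pow_add, pow_add]; ring
    _ = _ := by rw [hcard]
end
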